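/- Let (A_m)_{m≥0}, (B_m)_{m≥0} in ℚ(q)[X,X⁻¹] be defined by A_0 = B_0 = 1, A_m = (X⁻¹ A_{m−1} + X B_{m−1})/(1−q^m), B_m = X B_{m−1} + q^m A_m for m ≥ 1 (characters of generalized global Weyl modules for 𝔰𝔩₂). Then the formal series Ω_id = Σ_{m≥0} q^{m²/4} Z^m A_m and Ω_s = Σ_{m≥0} q^{m²/4} Z^m B_m, viewed as elements of ℚ(q^{1/4})[X,X⁻¹][[Z]] times the formal factor q^{z²} with Γ(q^{z²}) = q^{1/4}Z q^{z²}, satisfy the eigenfunction equation Ŷ_Z(q^{z²}Ω_id, q^{z²}Ω_s) = X⁻¹ · (q^{z²}Ω_id, q^{z²}Ω_s), where Ŷ_Z(f_id, f_s) = (Γ⁻¹(f_id − f_s), Γ(f_s) − Γ((f_s − f_id)/Z²)) and Γ(Z^m) = q^{m/2}Z^m. Equivalently, equating coefficients of Z^m: X⁻¹A_m = A_{m+1} − B_{m+1} and X⁻¹B_m = B_{m−1} − q^m(B_{m+1} − A_{m+1}) for all m (with B_{−1} interpreted via the m=0 case). -/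
import Mathlib


/- STATEMENT 13: Let `(A_m), (B_m)` in `ℚ(q)[X,X⁻¹]` be defined by `A_0 = B_0 = 1`,
`A_m = (X⁻¹A_{m−1} + X B_{m−1})/(1−q^m)`, `B_m = X B_{m−1} + q^m A_m` (the characters
of generalized global Weyl modules for `𝔰𝔩₂`).  Then the series
`Ω_id = Σ_m q^{m²/4} Z^m A_m`, `Ω_s = Σ_m q^{m²/4} Z^m B_m` (multiplied by the formal
factor `q^{z²}`) form an eigenfunction of the `q`-Toda Dunkl operator `Ŷ_Z` with
eigenvalue `X⁻¹`; equivalently — and this is the form stated here — equating the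
coefficients of `Z^m` on both sides of `Ŷ_Z(q^{z²}Ω) = X⁻¹·(q^{z²}Ω)` yields
`X⁻¹ A_m = A_{m+1} − B_{m+1}` for all `m ≥ 0` and
`X⁻¹ B_m = B_{m−1} − q^m (B_{m+1} − A_{m+1})` for all `m ≥ 1`. -/

noncomputable section
open LaurentPolynomial

abbrev Rq : Type := LaurentPolynomial (RatFunc ℚ)

def Xv : Rq := T 1
def Xinv : Rq := T (-1)
def qv : Rq := C RatFunc.X

theorem whittaker_eigenfunction_coefficients
    (A B : ℕ → Rq)
    (hA0 : A 0 = 1) (hB0 : B 0 = 1)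
    (hA : ∀ m : ℕ, A (m + 1) =
      C (1 - RatFunc.X ^ (m + 1))⁻¹ * (Xinv * A m + Xv * B m))
    (hB : ∀ m : ℕ, B (m + 1) = Xv * B m + qv ^ (m + 1) * A (m + 1)) :
    (∀ m : ℕ, Xinv * A m = A (m + 1) - B (m + 1)) ∧
    (∀ m : ℕ, 1 ≤ m →
      Xinv * B m = B (m - 1) - qv ^ m * (B (m + 1) - A (m + 1))) := by
  have hXX : Xinv * Xv = (1 : Rq) := by
    rw [Xinv, Xv, ← T_add]; norm_num
  have hne : ∀ m : ℕ, (1 - RatFunc.X ^ (m + 1) : RatFunc ℚ) ≠ 0 := by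
    intro m h
    have h1 : (RatFunc.X : RatFunc ℚ) ^ (m + 1) = 1 := (sub_eq_zero.mp h).symm
    have h2 : (Polynomial.X : Polynomial ℚ) ^ (m + 1) = 1 := by
      apply IsFractionRing.injective (Polynomial ℚ) (RatFunc ℚ)
      simpa [map_pow] using h1
    have := congrArg Polynomial.natDegree h2
    simp [Polynomial.natDegree_X_pow] at this
  have h1 : ∀ m : ℕ, Xinv * A m = A (m + 1) - B (m + 1) := by
    intro m
    have key : (1 - qv ^ (m + 1)) * A (m + 1) = Xinv * A m + Xv * B m := by
      rw [hA m]
      have hq : (1 - qv ^ (m + 1) : Rq) = C (1 - RatFunc.X ^ (m + 1)) := by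
        simp [qv, ← map_pow]
      rw [hq, ← mul_assoc, ← map_mul, mul_inv_cancel₀ (hne m), map_one, one_mul]
    rw [hB m]
    linear_combination -key
  refine ⟨h1, ?_⟩
  intro m hm
  obtain ⟨k, rfl⟩ : ∃ k, m = k + 1 := ⟨m - 1, (Nat.succ_pred_eq_of_pos hm).symm⟩
  simp only [Nat.add_sub_cancel]
  linear_combination Xinv * hB k + B k * hXX + qv ^ (k + 1) * h1 (k + 1)

end
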